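/- arXiv:1803.09526 — 2 statements merged into one kernel-verified Lean document; each statement's English description precedes it below -/
import Mathlib

section
/- Let n ≥ 2, x ∈ ℝⁿ, and B_x := C_xᵀ C_x. The following are equivalent: (i) for every n-th root of unity t ≠ 1, |c(t)| < |c(1)|, where c(t) = x_0 + x_1 t + ⋯ + x_{n-1} t^{n-1}; (ii) there exists m ∈ ℕ, m ≥ 1, such that every entry of B_xᵐ is strictly positive; (iii) there exists m₀ ∈ ℕ such that for all m ≥ m₀ every entry of B_xᵐ is strictly positive. -/
open Matrix

/-- The `n × n` real circulant matrix whose `(j,k)` entry is `x ((k - j) mod n)`. -/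
noncomputable def circulantR {n : ℕ} (x : Fin n → ℝ) : Matrix (Fin n) (Fin n) ℝ :=
  Matrix.of fun j k => x (k - j)

/-- The symbol `c(t) = x₀ + x₁ t + ⋯ + x_{n-1} t^{n-1}` of the real circulant matrix `C_x`,
evaluated at a complex number `t`. -/
noncomputable def symbolR {n : ℕ} (x : Fin n → ℝ) (t : ℂ) : ℂ :=
  ∑ j : Fin n, (x j : ℂ) * t ^ (j : ℕ)

lemma abs_one_of {t : ℂ} {n : ℕ} (hn : 0 < n) (ht : t ^ n = 1) : ‖t‖ = 1 := by
  have h : (‖t‖) ^ n = 1 := by rw [← norm_pow, ht, norm_one]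
  rcases lt_trichotomy (‖t‖) 1 with h1 | h1 | h1
  · nlinarith [pow_lt_one₀ (norm_nonneg t) h1 hn.ne']
  · exact h1
  · nlinarith [one_lt_pow₀ h1 hn.ne']

lemma pow_mod_eq {t : ℂ} {n : ℕ} (ht : t ^ n = 1) (a : ℕ) : t ^ (a % n) = t ^ a := by
  conv_rhs => rw [← Nat.div_add_mod a n, pow_add, pow_mul, ht, one_pow, one_mul]

lemma pow_val_add {n : ℕ} {t : ℂ} (ht : t ^ n = 1) (a b : Fin n) :
    t ^ ((a + b : Fin n) : ℕ) = t ^ (a : ℕ) * t ^ (b : ℕ) := by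
  rw [Fin.val_add, pow_mod_eq ht, pow_add]

lemma mulVec_circ {n : ℕ} [NeZero n] (x : Fin n → ℝ) (t : ℂ) (ht : t ^ n = 1) :
    ((circulantR x).map Complex.ofReal).mulVec (fun j : Fin n => t ^ (j : ℕ))
      = symbolR x t • fun j : Fin n => t ^ (j : ℕ) := by
  funext j
  simp only [mulVec, dotProduct, map_apply, circulantR, of_apply, Pi.smul_apply, smul_eq_mul,
    symbolR, Finset.sum_mul]
  refine Fintype.sum_equiv (Equiv.subRight j) _ _ (fun k => ?_)
  rw [Equiv.subRight_apply, mul_assoc, ← pow_val_add ht (k - j) j, sub_add_cancel]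

lemma mulVec_circT {n : ℕ} [NeZero n] (x : Fin n → ℝ) (t : ℂ) (ht : t ^ n = 1) :
    ((circulantR x)ᵀ.map Complex.ofReal).mulVec (fun j : Fin n => t ^ (j : ℕ))
      = (starRingEnd ℂ) (symbolR x t) • fun j : Fin n => t ^ (j : ℕ) := by
  have hn : 0 < n := Nat.pos_of_ne_zero (NeZero.ne n)
  have habs : ‖t‖ = 1 := abs_one_of hn ht
  have ht0 : t ≠ 0 := by
    intro h; rw [h, zero_pow hn.ne'] at ht; exact zero_ne_one ht
  funext j
  simp only [mulVec, dotProduct, map_apply, transpose_apply, circulantR, of_apply,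
    Pi.smul_apply, smul_eq_mul, symbolR, map_sum, Finset.sum_mul]
  refine Fintype.sum_equiv (Equiv.subLeft j) _ _ (fun k => ?_)
  rw [Equiv.subLeft_apply, _root_.map_mul, Complex.conj_ofReal,
    ← Complex.inv_eq_conj (by rw [norm_pow, habs, one_pow])]
  have hkey : t ^ ((j - k : Fin n) : ℕ) * t ^ (k : ℕ) = t ^ (j : ℕ) := by
    rw [← pow_val_add ht, sub_add_cancel]
  rw [← hkey]
  have hne : t ^ ((j - k : Fin n) : ℕ) ≠ 0 := pow_ne_zero _ ht0
  field_simp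

lemma mulVec_B {n : ℕ} [NeZero n] (x : Fin n → ℝ) (t : ℂ) (ht : t ^ n = 1) :
    ((((circulantR x)ᵀ * circulantR x)).map Complex.ofReal).mulVec
        (fun j : Fin n => t ^ (j : ℕ))
      = ((‖symbolR x t‖ : ℂ) ^ 2) • fun j : Fin n => t ^ (j : ℕ) := by
  have hmap : ((circulantR x)ᵀ * circulantR x).map Complex.ofReal
      = (circulantR x)ᵀ.map Complex.ofReal * (circulantR x).map Complex.ofReal :=
    Matrix.map_mul (f := Complex.ofRealHom)
  rw [hmap, ← mulVec_mulVec, mulVec_circ x t ht, mulVec_smul, mulVec_circT x t ht,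
    smul_smul]
  congr 1
  rw [Complex.mul_conj, Complex.normSq_eq_norm_sq, Complex.ofReal_pow]


lemma mulVec_B_pow {n : ℕ} [NeZero n] (x : Fin n → ℝ) (t : ℂ) (ht : t ^ n = 1) (m : ℕ) :
    ((((circulantR x)ᵀ * circulantR x) ^ m).map Complex.ofReal).mulVec
        (fun j : Fin n => t ^ (j : ℕ))
      = ((‖symbolR x t‖ : ℂ) ^ (2 * m)) • fun j : Fin n => t ^ (j : ℕ) := by
  have hmap : ∀ M N : Matrix (Fin n) (Fin n) ℝ,
      (M * N).map Complex.ofReal = M.map Complex.ofReal * N.map Complex.ofReal := fun M N =>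
    Matrix.map_mul (f := Complex.ofRealHom)
  induction m with
  | zero => simp [Matrix.map_one Complex.ofReal Complex.ofReal_zero Complex.ofReal_one]
  | succ m ih =>
    rw [pow_succ, hmap, ← mulVec_mulVec, mulVec_B x t ht, mulVec_smul, ih,
      smul_smul, ← pow_add]
    ring_nf

lemma entry_eq_row0 {n : ℕ} [NeZero n] (x : Fin n → ℝ) (t : ℂ) (ht : t ^ n = 1) (m : ℕ) :
    ((‖symbolR x t‖) ^ (2 * m) : ℝ)
      = ∑ k : Fin n, (((circulantR x)ᵀ * circulantR x) ^ m) 0 k * (t ^ (k : ℕ)).re := by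
  have h := congrFun (mulVec_B_pow x t ht m) 0
  simp only [mulVec, dotProduct, map_apply, Pi.smul_apply, smul_eq_mul] at h
  have h0 : ((0 : Fin n) : ℕ) = 0 := rfl
  rw [h0, pow_zero, mul_one] at h
  have := congrArg Complex.re h
  rw [← Complex.ofReal_pow, Complex.ofReal_re, Complex.re_sum] at this
  rw [← this]
  exact Finset.sum_congr rfl fun k _ => Complex.re_ofReal_mul _ _

lemma re_lt_one_of {t : ℂ} (habs : ‖t‖ = 1) (ht1 : t ≠ 1) : t.re < 1 := by
  rcases lt_or_eq_of_le ((Complex.re_le_norm t).trans habs.le) with h | h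
  · exact h
  · exfalso
    apply ht1
    have hsq : t.re ^ 2 + t.im ^ 2 = 1 := by
      have := Complex.sq_norm t
      rw [habs] at this
      simpa [Complex.normSq_apply, sq] using this.symm
    have him : t.im = 0 := by nlinarith
    exact Complex.ext (by simp [h]) (by simp [him])

lemma two_to_one {n : ℕ} (hn : 2 ≤ n) (x : Fin n → ℝ)
    (h : ∃ m : ℕ, 1 ≤ m ∧ ∀ j k, 0 < (((circulantR x)ᵀ * circulantR x) ^ m) j k) :
    ∀ t : ℂ, t ^ n = 1 → t ≠ 1 →
      ‖symbolR x t‖ < ‖symbolR x 1‖ := by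
  haveI : NeZero n := ⟨by omega⟩
  obtain ⟨m, hm1, hpos⟩ := h
  intro t ht ht1
  have hnpos : 0 < n := by omega
  have habs : ‖t‖ = 1 := abs_one_of hnpos ht
  have h1 := entry_eq_row0 x t ht m
  have h2 := entry_eq_row0 x 1 (one_pow n) m
  have hlt : (‖symbolR x t‖) ^ (2 * m) < (‖symbolR x 1‖) ^ (2 * m) := by
    rw [h1, h2]
    refine Finset.sum_lt_sum (fun k _ => ?_) ⟨⟨1, by omega⟩, Finset.mem_univ _, ?_⟩
    · simp only [one_pow, Complex.one_re]
      refine mul_le_mul_of_nonneg_left ?_ (hpos 0 k).le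
      calc (t ^ (k : ℕ)).re ≤ ‖t ^ (k : ℕ)‖ := Complex.re_le_norm _
        _ = 1 := by rw [norm_pow, habs, one_pow]
    · simp only [one_pow, Complex.one_re, mul_one]
      simpa using mul_lt_mul_of_pos_left (re_lt_one_of habs ht1) (hpos 0 ⟨1, by omega⟩)
  by_contra hc
  push_neg at hc
  exact absurd (pow_le_pow_left₀ (norm_nonneg _) hc (2 * m)) (not_le.mpr hlt)

lemma root_delta {n : ℕ} (hn : 0 < n) {ω : ℂ} (hprim : IsPrimitiveRoot ω n) (i k : Fin n) :
    ∑ l : Fin n, ((starRingEnd ℂ) ω ^ (k : ℕ) * ω ^ (i : ℕ)) ^ (l : ℕ)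
      = if i = k then (n : ℂ) else 0 := by
  have hω : ω ^ n = 1 := hprim.pow_eq_one
  have habs : ‖ω‖ = 1 := abs_one_of hn hω
  have hconj : (starRingEnd ℂ) ω ^ (k : ℕ) = (ω ^ (k : ℕ))⁻¹ := by
    rw [← map_pow, ← Complex.inv_eq_conj (by rw [norm_pow, habs, one_pow])]
  set z := (starRingEnd ℂ) ω ^ (k : ℕ) * ω ^ (i : ℕ) with hz
  have hzn : z ^ n = 1 := by
    rw [hz, mul_pow, ← pow_mul, ← pow_mul, ← map_pow, mul_comm (k:ℕ) n, mul_comm (i:ℕ) n,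
      pow_mul, pow_mul, hω, one_pow, one_pow, _root_.map_one, one_mul]
  rw [Fin.sum_univ_eq_sum_range (fun l => z ^ l) n]
  by_cases hik : i = k
  · subst hik
    have hz1 : z = 1 := by
      rw [hz, hconj]
      exact inv_mul_cancel₀ (pow_ne_zero _ (fun h => by simp [h, zero_pow hn.ne'] at hω))
    simp [hz1]
  · rw [if_neg hik]
    have hz1 : z ≠ 1 := by
      intro h
      apply hik
      have hne : (ω ^ (k : ℕ)) ≠ 0 := pow_ne_zero _ (fun h => by simp [h, zero_pow hn.ne'] at hω)
      rw [hz, hconj, inv_mul_eq_one₀ hne] at h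
      exact Fin.ext ((hprim.pow_inj k.isLt i.isLt h).symm)
    rw [geom_sum_eq hz1, hzn]
    simp

lemma entry_formula {n : ℕ} [NeZero n] (x : Fin n → ℝ) {ω : ℂ}
    (hprim : IsPrimitiveRoot ω n) (m : ℕ) (j k : Fin n) :
    (n : ℂ) * ((((circulantR x)ᵀ * circulantR x) ^ m) j k : ℂ)
      = ∑ l : Fin n, (starRingEnd ℂ) ω ^ ((l : ℕ) * (k : ℕ))
          * ((‖symbolR x (ω ^ (l : ℕ))‖ : ℂ) ^ (2 * m)
          * (ω ^ (l : ℕ)) ^ (j : ℕ)) := by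
  have hn : 0 < n := Nat.pos_of_ne_zero (NeZero.ne n)
  have hω : ω ^ n = 1 := hprim.pow_eq_one
  have hterm : ∀ l : Fin n,
      ((‖symbolR x (ω ^ (l : ℕ))‖ : ℂ) ^ (2 * m) * (ω ^ (l : ℕ)) ^ (j : ℕ))
        = ∑ i : Fin n, ((((circulantR x)ᵀ * circulantR x) ^ m) j i : ℂ) * (ω ^ (l : ℕ)) ^ (i : ℕ) := by
    intro l
    have h := congrFun (mulVec_B_pow x (ω ^ (l : ℕ)) (by rw [← pow_mul, mul_comm, pow_mul, hω, one_pow]) m) j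
    simp only [mulVec, dotProduct, map_apply, Pi.smul_apply, smul_eq_mul] at h
    exact h.symm
  calc (n : ℂ) * ((((circulantR x)ᵀ * circulantR x) ^ m) j k : ℂ)
      = ∑ i : Fin n, ((((circulantR x)ᵀ * circulantR x) ^ m) j i : ℂ)
          * ∑ l : Fin n, ((starRingEnd ℂ) ω ^ (k : ℕ) * ω ^ (i : ℕ)) ^ (l : ℕ) := by
        rw [Finset.sum_congr rfl (fun i _ => by rw [root_delta hn hprim i k])]
        simp [Finset.sum_ite_eq', mul_comm]
    _ = ∑ l : Fin n, (starRingEnd ℂ) ω ^ ((l : ℕ) * (k : ℕ))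
          * ((‖symbolR x (ω ^ (l : ℕ))‖ : ℂ) ^ (2 * m) * (ω ^ (l : ℕ)) ^ (j : ℕ)) := by
        simp only [Finset.mul_sum]
        rw [Finset.sum_comm]
        refine Finset.sum_congr rfl fun l _ => ?_
        rw [hterm l, Finset.mul_sum]
        refine Finset.sum_congr rfl fun i _ => ?_
        rw [mul_pow, ← pow_mul, ← pow_mul, mul_comm (k : ℕ) (l : ℕ), ← pow_mul,
          mul_comm (i : ℕ) (l : ℕ), pow_mul]
        ring

lemma one_to_three {n : ℕ} (hn : 2 ≤ n) (x : Fin n → ℝ)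
    (h : ∀ t : ℂ, t ^ n = 1 → t ≠ 1 →
      ‖symbolR x t‖ < ‖symbolR x 1‖) :
    ∃ m₀ : ℕ, ∀ m ≥ m₀, ∀ j k, 0 < (((circulantR x)ᵀ * circulantR x) ^ m) j k := by
  haveI : NeZero n := ⟨by omega⟩
  have hnpos : 0 < n := by omega
  set ω : ℂ := Complex.exp (2 * Real.pi * Complex.I / n) with hωdef
  have hprim : IsPrimitiveRoot ω n := Complex.isPrimitiveRoot_exp n (NeZero.ne n)
  have hω : ω ^ n = 1 := hprim.pow_eq_one
  set lam : Fin n → ℝ := fun l => (‖symbolR x (ω ^ (l : ℕ))‖) ^ 2 with hlam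
  set lam0 : ℝ := (‖symbolR x 1‖) ^ 2 with hlam0
  set s : Finset (Fin n) := Finset.univ.erase 0 with hs
  have hmem1 : (⟨1, by omega⟩ : Fin n) ∈ s :=
    Finset.mem_erase.mpr ⟨fun hc => by simpa using congrArg Fin.val hc, Finset.mem_univ _⟩
  have hsne : s.Nonempty := ⟨_, hmem1⟩
  have hlt : ∀ l ∈ s, lam l < lam0 := by
    intro l hl
    have hlv : (l : ℕ) ≠ 0 := fun hc => (Finset.mem_erase.mp hl).1 (Fin.ext hc)
    have ht1 : ω ^ (l : ℕ) ≠ 1 :=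
      hprim.pow_ne_one_of_pos_of_lt hlv l.isLt
    have htn : (ω ^ (l : ℕ)) ^ n = 1 := by
      rw [← pow_mul, mul_comm, pow_mul, hω, one_pow]
    exact pow_lt_pow_left₀ (h _ htn ht1) (norm_nonneg _) two_ne_zero
  have hlam0pos : 0 < lam0 := lt_of_le_of_lt (sq_nonneg _) (hlt _ hmem1)
  set ρ : ℝ := s.sup' hsne lam with hρ
  have hρlt : ρ < lam0 := (Finset.sup'_lt_iff hsne).mpr hlt
  have hρ0 : 0 ≤ ρ := le_trans (sq_nonneg _) (Finset.le_sup' lam hmem1)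
  set r : ℝ := ρ / lam0 with hr
  have hr0 : 0 ≤ r := div_nonneg hρ0 hlam0pos.le
  have hr1 : r < 1 := (div_lt_one hlam0pos).mpr hρlt
  obtain ⟨N, hN⟩ := exists_pow_lt_of_lt_one (show (0:ℝ) < 1 / n by positivity) hr1
  refine ⟨N, fun m hm j k => ?_⟩
  -- the entry formula, real part
  have hre := congrArg Complex.re (entry_formula x hprim m j k)
  rw [Complex.re_sum] at hre
  have hL : ((n : ℂ) * ((((circulantR x)ᵀ * circulantR x) ^ m) j k : ℂ)).re
      = n * (((circulantR x)ᵀ * circulantR x) ^ m) j k := by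
    simp
  rw [hL] at hre
  set f : Fin n → ℂ := fun l => (starRingEnd ℂ) ω ^ ((l : ℕ) * (k : ℕ))
      * ((‖symbolR x (ω ^ (l : ℕ))‖ : ℂ) ^ (2 * m) * (ω ^ (l : ℕ)) ^ (j : ℕ)) with hf
  have hsplit : ∑ l : Fin n, (f l).re = (f 0).re + ∑ l ∈ s, (f l).re :=
    (Finset.add_sum_erase Finset.univ (fun l => (f l).re) (Finset.mem_univ 0)).symm
  have hf0 : (f 0).re = lam0 ^ m := by
    have h0v : ((0 : Fin n) : ℕ) = 0 := rfl
    simp only [hf, h0v, mul_zero, pow_zero, one_mul, zero_mul, mul_one, one_pow,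
      ← Complex.ofReal_pow, Complex.ofReal_re, hlam0]
    rw [← pow_mul, mul_comm 2 m]
  have hfl : ∀ l ∈ s, -(ρ ^ m) ≤ (f l).re := by
    intro l hl
    have habsf : ‖f l‖ = lam l ^ m := by
      simp only [hf]
      rw [norm_mul, norm_mul, norm_pow, norm_pow, norm_pow]
      have habsω : ‖ω‖ = 1 := abs_one_of hnpos hω
      simp only [norm_pow, habsω, Complex.norm_conj, Complex.norm_real, Real.norm_eq_abs, one_pow, one_mul,
        mul_one, hlam]
      rw [_root_.abs_of_nonneg (norm_nonneg _), ← pow_mul]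
    have h1 : -(‖f l‖) ≤ (f l).re := (abs_le.1 (Complex.abs_re_le_norm (f l))).1
    rw [habsf] at h1
    refine le_trans (neg_le_neg ?_) h1
    exact pow_le_pow_left₀ (sq_nonneg _) (Finset.le_sup' lam hl) m
  have hsum : -((n - 1 : ℝ) * ρ ^ m) ≤ ∑ l ∈ s, (f l).re := by
    have hcard : (s.card : ℝ) = (n - 1 : ℝ) := by
      rw [hs, Finset.card_erase_of_mem (Finset.mem_univ _), Finset.card_univ, Fintype.card_fin]
      push_cast [Nat.cast_sub (by omega : 1 ≤ n)]
      ring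
    calc -((n - 1 : ℝ) * ρ ^ m) = ∑ _l ∈ s, -(ρ ^ m) := by
          rw [Finset.sum_const, nsmul_eq_mul, hcard]; ring
      _ ≤ _ := Finset.sum_le_sum hfl
  -- now the size comparison
  have hρm : ρ ^ m = r ^ m * lam0 ^ m := by
    rw [hr, div_pow, div_mul_cancel₀]
    exact pow_ne_zero _ hlam0pos.ne'
  have hrm : r ^ m ≤ r ^ N := pow_le_pow_of_le_one hr0 hr1.le hm
  have hkey : (n - 1 : ℝ) * ρ ^ m < lam0 ^ m := by
    have hlam0m : (0:ℝ) < lam0 ^ m := pow_pos hlam0pos m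
    have h2 : (n - 1 : ℝ) * r ^ m < 1 := by
      have hn1 : (0:ℝ) ≤ (n - 1 : ℝ) := by
        have : (2:ℝ) ≤ n := by exact_mod_cast hn
        linarith
      calc (n - 1 : ℝ) * r ^ m ≤ (n - 1 : ℝ) * r ^ N :=
            mul_le_mul_of_nonneg_left hrm hn1
        _ < (n : ℝ) * (1 / n) := by
            apply mul_lt_mul' (by linarith) hN (pow_nonneg hr0 _)
            positivity
        _ = 1 := by field_simp
    calc (n - 1 : ℝ) * ρ ^ m = ((n - 1 : ℝ) * r ^ m) * lam0 ^ m := by rw [hρm]; ring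
      _ < 1 * lam0 ^ m := by nlinarith
      _ = lam0 ^ m := one_mul _
  have hfinal : 0 < (n : ℝ) * (((circulantR x)ᵀ * circulantR x) ^ m) j k := by
    rw [hre, hsplit, hf0]
    nlinarith
  have hnn : (0:ℝ) < (n : ℝ) := by exact_mod_cast hnpos
  nlinarith

theorem stmt11 (n : ℕ) (hn : 2 ≤ n) (x : Fin n → ℝ) :
    List.TFAE
      [∀ t : ℂ, t ^ n = 1 → t ≠ 1 →
          ‖symbolR x t‖ < ‖symbolR x 1‖,
        ∃ m : ℕ, 1 ≤ m ∧ ∀ j k, 0 < (((circulantR x)ᵀ * circulantR x) ^ m) j k,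
        ∃ m₀ : ℕ, ∀ m ≥ m₀, ∀ j k, 0 < (((circulantR x)ᵀ * circulantR x) ^ m) j k] := by
  tfae_have 1 → 3 := one_to_three hn x
  tfae_have 3 → 2 := fun ⟨m₀, h⟩ => ⟨m₀ + 1, by omega, h _ (by omega)⟩
  tfae_have 2 → 1 := two_to_one hn x
  tfae_finish
end

section
/- Let n ≥ 2, x ∈ ℂⁿ, and B_x := C_x* C_x. If for every n-th root of unity t ≠ 1 one has |c(t)| < |c(1)| (where c(t) = x_0 + x_1 t + ⋯ + x_{n-1} t^{n-1}), then there exists m₀ ∈ ℕ such that for all m ≥ m₀ every entry of B_xᵐ is nonzero and has principal argument of absolute value less than π/(2n). -/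
open Matrix Complex Finset

/-- The `n × n` complex circulant matrix whose `(j,k)` entry is `x ((k - j) mod n)`. -/
noncomputable def circulantC {n : ℕ} (x : Fin n → ℂ) : Matrix (Fin n) (Fin n) ℂ :=
  Matrix.of fun j k => x (k - j)

/-- The symbol `c(t) = x₀ + x₁ t + ⋯ + x_{n-1} t^{n-1}` of the circulant matrix `C_x`. -/
noncomputable def symbolC {n : ℕ} (x : Fin n → ℂ) (t : ℂ) : ℂ :=
  ∑ j : Fin n, x j * t ^ (j : ℕ)


lemma arg_small {z : ℂ} {θ : ℝ} (hθ0 : 0 < θ) (hθ : θ < Real.pi / 2)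
    (hz : ‖z - 1‖ < Real.sin θ) : z ≠ 0 ∧ |z.arg| < θ := by
  have hs : 0 < Real.sin θ := Real.sin_pos_of_pos_of_lt_pi hθ0 (by linarith [Real.pi_pos])
  have hc : 0 < Real.cos θ := Real.cos_pos_of_mem_Ioo ⟨by linarith, hθ⟩
  set a := z.re - 1 with ha
  set b := z.im with hb
  have habs : a ^ 2 + b ^ 2 < Real.sin θ ^ 2 := by
    have h1 : ‖z - 1‖ ^ 2 = a ^ 2 + b ^ 2 := by
      rw [Complex.sq_norm, Complex.normSq_apply]; simp [ha, hb]; ring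
    nlinarith [norm_nonneg (z - 1)]
  have hsle : Real.sin θ ≤ 1 := Real.sin_le_one θ
  have hre : 0 < z.re := by nlinarith [sq_nonneg b, sq_nonneg (a + Real.sin θ)]
  have hz0 : z ≠ 0 := fun h => by simp [h] at hre
  refine ⟨hz0, ?_⟩
  have hpyth : Real.sin θ ^ 2 + Real.cos θ ^ 2 = 1 := Real.sin_sq_add_cos_sq θ
  have hre' : z.re = 1 + a := by rw [ha]; ring
  have key : |b| * Real.cos θ < Real.sin θ * z.re := by
    have h8 : (|b| * Real.cos θ - a * Real.sin θ) ^ 2 ≤ a ^ 2 + b ^ 2 := by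
      nlinarith [sq_nonneg (|b| * Real.sin θ + a * Real.cos θ), _root_.sq_abs b]
    rw [hre']
    nlinarith [sq_nonneg (|b| * Real.cos θ - a * Real.sin θ - Real.sin θ)]
  have hargpi : |z.arg| < Real.pi / 2 := Complex.abs_arg_lt_pi_div_two_iff.2 (Or.inl hre)
  by_contra hcon
  push_neg at hcon
  have htan : Real.tan θ ≤ Real.tan |z.arg| :=
    Real.strictMonoOn_tan.monotoneOn ⟨by linarith, hθ⟩
      ⟨by linarith [abs_nonneg z.arg], hargpi⟩ hcon
  have h3 : Real.tan |z.arg| = |Real.tan z.arg| := by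
    rcases le_or_gt 0 z.arg with h4 | h4
    · rw [_root_.abs_of_nonneg h4, _root_.abs_of_nonneg (Real.tan_nonneg_of_nonneg_of_le_pi_div_two h4
        (by rw [_root_.abs_of_nonneg h4] at hargpi; exact hargpi.le))]
    · rw [_root_.abs_of_neg h4, Real.tan_neg,
        _root_.abs_of_nonpos (Real.tan_nonpos_of_nonpos_of_neg_pi_div_two_le h4.le
          (by linarith [neg_lt_of_abs_lt hargpi]))]
  have h6 : |Real.tan z.arg| = |b| / z.re := by
    rw [Complex.tan_arg, abs_div, _root_.abs_of_pos hre]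
  have h7 : Real.tan θ = Real.sin θ / Real.cos θ := Real.tan_eq_sin_div_cos θ
  rw [h3, h6, h7] at htan
  have := (div_le_div_iff₀ hc hre).1 htan
  linarith

/-- rank-one "projection" matrix for eigenvalue t -/
noncomputable def Emat {n : ℕ} (t : ℂ) : Matrix (Fin n) (Fin n) ℂ :=
  Matrix.of fun j k => t ^ (j : ℕ) * (starRingEnd ℂ t) ^ (k : ℕ)

lemma pow_mod_root {t : ℂ} {n : ℕ} (ht : t ^ n = 1) (m : ℕ) :
    t ^ (m % n) = t ^ m := by
  conv_rhs => rw [← Nat.mod_add_div m n, pow_add, pow_mul, ht, one_pow, mul_one]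

lemma pow_fin_add {n : ℕ} [NeZero n] {t : ℂ} (ht : t ^ n = 1) (a b : Fin n) :
    t ^ (((a + b) : Fin n) : ℕ) = t ^ (a : ℕ) * t ^ (b : ℕ) := by
  rw [Fin.val_add, pow_mod_root ht, pow_add]

lemma pow_fin_neg {n : ℕ} [NeZero n] {t : ℂ} (ht : t ^ n = 1) (htc : starRingEnd ℂ t * t = 1)
    (d : Fin n) : t ^ (((-d) : Fin n) : ℕ) = (starRingEnd ℂ t) ^ (d : ℕ) := by
  have h0 : t ^ (((-d + d) : Fin n) : ℕ) = 1 := by simp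
  rw [pow_fin_add ht] at h0
  have h2 : (starRingEnd ℂ t) ^ (d : ℕ) * t ^ (d : ℕ) = 1 := by
    rw [← mul_pow, htc, one_pow]
  have ht0 : t ^ (d : ℕ) ≠ 0 := by
    intro hh
    rw [hh, mul_zero] at h2; exact zero_ne_one h2
  have := mul_right_cancel₀ ht0 (h0.trans h2.symm)
  exact this

lemma circ_mul_Emat {n : ℕ} [NeZero n] (x : Fin n → ℂ) {t : ℂ} (ht : t ^ n = 1) :
    circulantC x * Emat t = symbolC x t • Emat t := by
  ext j k
  simp only [mul_apply, circulantC, Emat, Matrix.of_apply, Matrix.smul_apply, smul_eq_mul, symbolC]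
  calc ∑ p : Fin n, x (p - j) * (t ^ (p : ℕ) * (starRingEnd ℂ t) ^ (k : ℕ))
      = ∑ d : Fin n, x ((j + d) - j) * (t ^ (((j + d) : Fin n) : ℕ) * (starRingEnd ℂ t) ^ (k : ℕ)) :=
        (Fintype.sum_equiv (Equiv.addLeft j) _ _ (fun d => rfl)).symm
    _ = ∑ d : Fin n, (x d * t ^ (d : ℕ)) * (t ^ (j : ℕ) * (starRingEnd ℂ t) ^ (k : ℕ)) := by
        refine Finset.sum_congr rfl fun d _ => ?_
        rw [add_sub_cancel_left, pow_fin_add ht]; ring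
    _ = (∑ d : Fin n, x d * t ^ (d : ℕ)) * (t ^ (j : ℕ) * (starRingEnd ℂ t) ^ (k : ℕ)) := by
        rw [← Finset.sum_mul]

lemma circH_mul_Emat {n : ℕ} [NeZero n] (x : Fin n → ℂ) {t : ℂ} (ht : t ^ n = 1)
    (htc : starRingEnd ℂ t * t = 1) :
    (circulantC x)ᴴ * Emat t = (starRingEnd ℂ (symbolC x t)) • Emat t := by
  ext j k
  simp only [mul_apply, circulantC, Emat, Matrix.of_apply, Matrix.smul_apply, smul_eq_mul,
    conjTranspose_apply, star_def]
  calc ∑ p : Fin n, starRingEnd ℂ (x (j - p)) * (t ^ (p : ℕ) * (starRingEnd ℂ t) ^ (k : ℕ))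
      = ∑ d : Fin n, starRingEnd ℂ (x (j - (j - d))) *
          (t ^ (((j - d) : Fin n) : ℕ) * (starRingEnd ℂ t) ^ (k : ℕ)) :=
        (Fintype.sum_equiv (Equiv.subLeft j) _ _ (fun d => rfl)).symm
    _ = ∑ d : Fin n, (starRingEnd ℂ (x d * t ^ (d : ℕ))) *
          (t ^ (j : ℕ) * (starRingEnd ℂ t) ^ (k : ℕ)) := by
        refine Finset.sum_congr rfl fun d _ => ?_
        have h1 : j - (j - d) = d := by abel
        have h2 : (j : Fin n) - d = j + (-d) := by abel
        rw [h1, h2, pow_fin_add ht, pow_fin_neg ht htc, _root_.map_mul, map_pow]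
        ring
    _ = (starRingEnd ℂ (∑ d : Fin n, x d * t ^ (d : ℕ))) *
          (t ^ (j : ℕ) * (starRingEnd ℂ t) ^ (k : ℕ)) := by
        rw [map_sum, ← Finset.sum_mul]
    _ = starRingEnd ℂ (symbolC x t) * (t ^ (j : ℕ) * (starRingEnd ℂ t) ^ (k : ℕ)) := rfl

lemma B_pow_mul_Emat {n : ℕ} [NeZero n] (x : Fin n → ℂ) {t : ℂ} (ht : t ^ n = 1)
    (htc : starRingEnd ℂ t * t = 1) (m : ℕ) :
    ((circulantC x)ᴴ * circulantC x) ^ m * Emat t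
      = (((‖symbolC x t‖) ^ 2 : ℝ) : ℂ) ^ m • Emat t := by
  induction m with
  | zero => simp
  | succ m ih =>
    have h1 : ((circulantC x)ᴴ * circulantC x) * Emat t
        = (((‖symbolC x t‖) ^ 2 : ℝ) : ℂ) • Emat t := by
      rw [Matrix.mul_assoc, circ_mul_Emat x ht, Matrix.mul_smul, circH_mul_Emat x ht htc,
        smul_smul]
      congr 1
      rw [Complex.mul_conj]
      norm_cast
      exact Complex.normSq_eq_norm_sq _
    rw [pow_succ, Matrix.mul_assoc, h1, Matrix.mul_smul, ih, smul_smul, ← pow_succ']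

lemma sum_Emat (n : ℕ) (hn : n ≠ 0) :
    ∑ l : Fin n, (Emat (Complex.exp (2 * Real.pi * Complex.I / n) ^ (l : ℕ)) :
        Matrix (Fin n) (Fin n) ℂ)
      = (n : ℂ) • (1 : Matrix (Fin n) (Fin n) ℂ) := by
  set ω := Complex.exp (2 * Real.pi * Complex.I / n) with hω
  have hprim : IsPrimitiveRoot ω n := Complex.isPrimitiveRoot_exp n hn
  have hωn : ω ^ n = 1 := hprim.pow_eq_one
  have habs : ‖ω‖ = 1 := by
    have h1 : (2 : ℂ) * Real.pi * Complex.I / n = ((2 * Real.pi / n : ℝ) : ℂ) * Complex.I := by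
      push_cast; ring
    rw [hω, h1, Complex.norm_exp_ofReal_mul_I]
  have hωc : starRingEnd ℂ ω * ω = 1 := by
    rw [mul_comm, Complex.mul_conj]
    norm_cast
    rw [Complex.normSq_eq_norm_sq, habs]; norm_num
  ext j k
  have hterm : ∀ l : Fin n, (Emat (ω ^ (l : ℕ)) : Matrix (Fin n) (Fin n) ℂ) j k
      = (ω ^ (j : ℕ) * (starRingEnd ℂ ω) ^ (k : ℕ)) ^ (l : ℕ) := by
    intro l
    simp only [Emat, Matrix.of_apply, ← map_pow, ← pow_mul, mul_pow]
    rw [Nat.mul_comm (l : ℕ) (j : ℕ), Nat.mul_comm (l : ℕ) (k : ℕ)]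
  rw [Matrix.sum_apply]
  simp only [hterm]
  set ζ := ω ^ (j : ℕ) * (starRingEnd ℂ ω) ^ (k : ℕ) with hζ
  rw [Fin.sum_univ_eq_sum_range (fun i => ζ ^ i) n]
  by_cases hjk : j = k
  · subst hjk
    have hζ1 : ζ = 1 := by
      rw [hζ, ← mul_pow, mul_comm ω, hωc, one_pow]
    simp [hζ1, Matrix.one_apply]
  · have hζne : ζ ≠ 1 := by
      intro hc
      apply hjk
      have h2 : ω ^ (j : ℕ) = ω ^ (k : ℕ) := by
        have h3 := congrArg (· * ω ^ (k : ℕ)) hc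
        simp only [one_mul] at h3
        calc ω ^ (j : ℕ) = ω ^ (j : ℕ) * ((starRingEnd ℂ ω) ^ (k : ℕ) * ω ^ (k : ℕ)) := by
              rw [← mul_pow, hωc, one_pow, mul_one]
          _ = ζ * ω ^ (k : ℕ) := by rw [hζ]; ring
          _ = ω ^ (k : ℕ) := h3
      exact Fin.ext (hprim.pow_inj j.isLt k.isLt h2)
    have hζn : ζ ^ n = 1 := by
      rw [hζ, mul_pow, ← pow_mul, ← pow_mul, Nat.mul_comm (j:ℕ) n, Nat.mul_comm (k:ℕ) n,
        pow_mul, pow_mul, hωn, ← map_pow, hωn]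
      simp
    rw [geom_sum_eq hζne, hζn]
    simp [Matrix.one_apply, hjk]

lemma entry_formula_s15 (n : ℕ) (hn : n ≠ 0) (x : Fin n → ℂ) (m : ℕ) (j k : Fin n) :
    haveI : NeZero n := ⟨hn⟩
    (n : ℂ) * ((((circulantC x)ᴴ * circulantC x) ^ m) j k)
      = ∑ l : Fin n,
          (((‖symbolC x (Complex.exp (2 * Real.pi * Complex.I / n) ^ (l : ℕ))‖) ^ 2 :
            ℝ) : ℂ) ^ m *
          Emat (Complex.exp (2 * Real.pi * Complex.I / n) ^ (l : ℕ)) j k := by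
  haveI : NeZero n := ⟨hn⟩
  set ω := Complex.exp (2 * Real.pi * Complex.I / n) with hω
  have hprim : IsPrimitiveRoot ω n := Complex.isPrimitiveRoot_exp n hn
  have hωn : ω ^ n = 1 := hprim.pow_eq_one
  have habs : ‖ω‖ = 1 := by
    have h1 : (2 : ℂ) * Real.pi * Complex.I / n = ((2 * Real.pi / n : ℝ) : ℂ) * Complex.I := by
      push_cast; ring
    rw [hω, h1, Complex.norm_exp_ofReal_mul_I]
  have hmat : (n : ℂ) • (((circulantC x)ᴴ * circulantC x) ^ m)
      = ∑ l : Fin n,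
          (((‖symbolC x (ω ^ (l : ℕ))‖) ^ 2 : ℝ) : ℂ) ^ m • Emat (ω ^ (l : ℕ)) := by
    have hstep : ∀ l : Fin n,
        ((circulantC x)ᴴ * circulantC x) ^ m * Emat (ω ^ (l : ℕ))
          = (((‖symbolC x (ω ^ (l : ℕ))‖) ^ 2 : ℝ) : ℂ) ^ m • Emat (ω ^ (l : ℕ)) := by
      intro l
      apply B_pow_mul_Emat
      · rw [← pow_mul, Nat.mul_comm, pow_mul, hωn, one_pow]
      · rw [mul_comm, Complex.mul_conj]
        norm_cast
        rw [Complex.normSq_eq_norm_sq, norm_pow, habs]; norm_num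
    calc (n : ℂ) • (((circulantC x)ᴴ * circulantC x) ^ m)
        = ((circulantC x)ᴴ * circulantC x) ^ m * ((n : ℂ) • 1) := by
          rw [Matrix.mul_smul, Matrix.mul_one]
      _ = ((circulantC x)ᴴ * circulantC x) ^ m * (∑ l : Fin n, Emat (ω ^ (l : ℕ))) := by
          rw [sum_Emat n hn]
      _ = ∑ l : Fin n, ((circulantC x)ᴴ * circulantC x) ^ m * Emat (ω ^ (l : ℕ)) := by
          rw [Finset.mul_sum]
      _ = _ := by simp only [hstep]
  have := congrFun (congrFun hmat j) k
  simpa [Matrix.sum_apply] using this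

theorem stmt15 (n : ℕ) (hn : 2 ≤ n) (x : Fin n → ℂ)
    (h : ∀ t : ℂ, t ^ n = 1 → t ≠ 1 →
      ‖symbolC x t‖ < ‖symbolC x 1‖) :
    ∃ m₀ : ℕ, ∀ m ≥ m₀, ∀ j k : Fin n,
      (((circulantC x)ᴴ * circulantC x) ^ m) j k ≠ 0 ∧
      |Complex.arg ((((circulantC x)ᴴ * circulantC x) ^ m) j k)| < Real.pi / (2 * n) := by
  have hn0 : n ≠ 0 := by omega
  haveI : NeZero n := ⟨hn0⟩
  set ω := Complex.exp (2 * Real.pi * Complex.I / n) with hω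
  have hprim : IsPrimitiveRoot ω n := Complex.isPrimitiveRoot_exp n hn0
  have hωn : ω ^ n = 1 := hprim.pow_eq_one
  have habs : ‖ω‖ = 1 := by
    have h1 : (2 : ℂ) * Real.pi * Complex.I / n = ((2 * Real.pi / n : ℝ) : ℂ) * Complex.I := by
      push_cast; ring
    rw [hω, h1, Complex.norm_exp_ofReal_mul_I]
  have hlam : ∀ l : Fin n, 0 ≤ (‖symbolC x (ω ^ (l : ℕ))‖) ^ 2 :=
    fun l => sq_nonneg _
  have h00 : ω ^ (((0 : Fin n)) : ℕ) = 1 := by simp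
  set Λ : ℝ := (‖symbolC x 1‖) ^ 2 with hΛdef
  have hΛ0 : (‖symbolC x (ω ^ (((0 : Fin n)) : ℕ))‖) ^ 2 = Λ := by rw [h00]
  have habs1pos : 0 < ‖symbolC x 1‖ := by
    have hω1 : ω ≠ 1 := hprim.ne_one (by omega)
    have := h ω hωn hω1
    linarith [norm_nonneg (symbolC x ω)]
  have hΛpos : 0 < Λ := by rw [hΛdef]; exact pow_pos habs1pos 2
  have hlt : ∀ l : Fin n, l ≠ 0 → (‖symbolC x (ω ^ (l : ℕ))‖) ^ 2 < Λ := by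
    intro l hl
    have htn : (ω ^ (l : ℕ)) ^ n = 1 := by
      rw [← pow_mul, Nat.mul_comm, pow_mul, hωn, one_pow]
    have ht1 : ω ^ (l : ℕ) ≠ 1 := by
      intro hc
      apply hl
      have hdvd := (hprim.pow_eq_one_iff_dvd (l : ℕ)).1 hc
      exact Fin.val_injective (by simpa using Nat.eq_zero_of_dvd_of_lt hdvd l.isLt)
    have := h _ htn ht1
    rw [hΛdef]
    exact pow_lt_pow_left₀ this (norm_nonneg _) two_ne_zero
  set θ := Real.pi / (2 * (n : ℝ)) with hθdef
  have hnr : (0 : ℝ) < n := by positivity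
  have hθ0 : 0 < θ := by rw [hθdef]; positivity
  have hθlt : θ < Real.pi / 2 := by
    rw [hθdef]
    apply div_lt_div_of_pos_left Real.pi_pos (by norm_num)
    have : (2 : ℝ) ≤ n := by exact_mod_cast hn
    linarith
  have hsin : 0 < Real.sin θ :=
    Real.sin_pos_of_pos_of_lt_pi hθ0 (lt_trans hθlt (by linarith [Real.pi_pos]))
  have htend : Filter.Tendsto
      (fun m : ℕ => ∑ l ∈ Finset.univ.erase (0 : Fin n),
        ((‖symbolC x (ω ^ (l : ℕ))‖) ^ 2 / Λ) ^ m)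
      Filter.atTop (nhds 0) := by
    have h0' : (0 : ℝ) = ∑ l ∈ Finset.univ.erase (0 : Fin n), (0 : ℝ) := by simp
    rw [h0']
    apply tendsto_finset_sum
    intro l hl
    apply tendsto_pow_atTop_nhds_zero_of_lt_one (div_nonneg (hlam l) hΛpos.le)
    exact (div_lt_one hΛpos).2 (hlt l (Finset.ne_of_mem_erase hl))
  obtain ⟨m₀, hm₀⟩ := Filter.eventually_atTop.1 (htend.eventually_lt_const hsin)
  refine ⟨m₀, fun m hm j k => ?_⟩
  set e := ((((circulantC x)ᴴ * circulantC x) ^ m) j k) with he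
  have hef := entry_formula_s15 n hn0 x m j k
  rw [← hω, ← he] at hef
  have hE0 : Emat (ω ^ (((0 : Fin n)) : ℕ)) j k = (1 : ℂ) := by
    rw [h00]; simp [Emat]
  have hsplit : (n : ℂ) * e = ((Λ ^ m : ℝ) : ℂ)
      + ∑ l ∈ Finset.univ.erase (0 : Fin n),
          (((‖symbolC x (ω ^ (l : ℕ))‖) ^ 2 : ℝ) : ℂ) ^ m * Emat (ω ^ (l : ℕ)) j k := by
    rw [hef, ← Finset.add_sum_erase _ _ (Finset.mem_univ (0 : Fin n)), hΛ0, hE0, mul_one]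
    push_cast
    ring
  have hEabs : ∀ l : Fin n, ‖(Emat (ω ^ (l : ℕ)) j k : ℂ)‖ = 1 := by
    intro l
    simp [Emat, norm_pow, Complex.norm_conj, habs]
  have hΛmpos : 0 < Λ ^ m := pow_pos hΛpos m
  set z : ℂ := ((n : ℂ) * e) / ((Λ ^ m : ℝ) : ℂ) with hz
  have hΛmne : ((Λ ^ m : ℝ) : ℂ) ≠ 0 := by
    exact_mod_cast (Complex.ofReal_ne_zero.2 hΛmpos.ne')
  have hbound : ‖z - 1‖ < Real.sin θ := by
    have h1 : z - 1 = (∑ l ∈ Finset.univ.erase (0 : Fin n),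
        (((‖symbolC x (ω ^ (l : ℕ))‖) ^ 2 : ℝ) : ℂ) ^ m * Emat (ω ^ (l : ℕ)) j k)
        / ((Λ ^ m : ℝ) : ℂ) := by
      rw [hz, hsplit, add_div, div_self hΛmne, add_sub_cancel_left]
    rw [h1, norm_div]
    have h2 : ‖((Λ ^ m : ℝ) : ℂ)‖ = Λ ^ m := by
      rw [Complex.norm_real, Real.norm_eq_abs, abs_of_pos hΛmpos]
    rw [h2, div_lt_iff₀ hΛmpos]
    calc ‖∑ l ∈ Finset.univ.erase (0 : Fin n),
          (((‖symbolC x (ω ^ (l : ℕ))‖) ^ 2 : ℝ) : ℂ) ^ m * Emat (ω ^ (l : ℕ)) j k‖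
        ≤ ∑ l ∈ Finset.univ.erase (0 : Fin n),
            ‖(((‖symbolC x (ω ^ (l : ℕ))‖) ^ 2 : ℝ) : ℂ) ^ m
              * Emat (ω ^ (l : ℕ)) j k‖ := by
          exact norm_sum_le _ _
      _ = ∑ l ∈ Finset.univ.erase (0 : Fin n), ((‖symbolC x (ω ^ (l : ℕ))‖) ^ 2) ^ m := by
          refine Finset.sum_congr rfl fun l _ => ?_
          rw [norm_mul, hEabs l, mul_one, norm_pow, Complex.norm_real, Real.norm_eq_abs, _root_.abs_of_nonneg (hlam l)]
      _ < Real.sin θ * Λ ^ m := by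
          have h3 := hm₀ m hm
          have h4 : ∑ l ∈ Finset.univ.erase (0 : Fin n),
              ((‖symbolC x (ω ^ (l : ℕ))‖) ^ 2) ^ m
              = (∑ l ∈ Finset.univ.erase (0 : Fin n),
                  ((‖symbolC x (ω ^ (l : ℕ))‖) ^ 2 / Λ) ^ m) * Λ ^ m := by
            rw [Finset.sum_mul]
            refine Finset.sum_congr rfl fun l _ => ?_
            rw [div_pow, div_mul_cancel₀ _ hΛmpos.ne']
          rw [h4]
          exact mul_lt_mul_of_pos_right h3 hΛmpos
  obtain ⟨hz0, hzarg⟩ := arg_small hθ0 hθlt hbound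
  have heq : e = ((Λ ^ m / (n : ℝ) : ℝ) : ℂ) * z := by
    rw [hz]
    have hnC : (n : ℂ) ≠ 0 := by exact_mod_cast (Nat.cast_ne_zero (R := ℂ)).2 hn0
    have hAne : ((‖symbolC x 1‖ ^ 2 : ℝ) : ℂ) ≠ 0 :=
      Complex.ofReal_ne_zero.2 (pow_ne_zero 2 habs1pos.ne')
    push_cast
    field_simp [hnC, hAne]
    rw [mul_div_cancel_right₀ _ (pow_ne_zero m (Complex.ofReal_ne_zero.2 hΛpos.ne'))]
  have hfacpos : 0 < Λ ^ m / (n : ℝ) := div_pos hΛmpos hnr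
  constructor
  · rw [heq]
    exact mul_ne_zero (by exact_mod_cast (Complex.ofReal_ne_zero.2 hfacpos.ne')) hz0
  · rw [heq, Complex.arg_real_mul z hfacpos]
    exact hzarg
end
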